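/- Define operators on functions f: ℕ → ℝ (with the convention f(-1)=0) by (a f)(s) = (1-q)^{-1/2}[μ^{1/2} q^s f(s) - √((1-q^{s+1})(1-μq^s)) f(s+1)] and (a⁺ f)(s) = (1-q)^{-1/2}[μ^{1/2} q^s f(s) - √((1-q^s)(1-μq^{s-1})) f(s-1)]. Then for 0 < q < 1, 0 < μ < 1, these satisfy the q-commutation relation a a⁺ - q a⁺ a = I (the identity operator) on all such functions. -/

import Mathlib

open Finset

/-- q-shifted factorial `(a;q)_k`. -/
noncomputable def qPoch (a q : ℝ) (k : ℕ) : ℝ :=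
  ∏ j ∈ Finset.range k, (1 - a * q ^ j)

/-- infinite q-shifted factorial `(a;q)_∞`. -/
noncomputable def qPochInf (a q : ℝ) : ℝ :=
  ∏' j : ℕ, (1 - a * q ^ j)

/-- Al-Salam–Carlitz q-Charlier polynomial `c_n^μ(x|q)`. -/
noncomputable def qCharlier (μ q : ℝ) (n : ℕ) (x : ℝ) : ℝ :=
  ∑ k ∈ Finset.range (n + 1),
    qPoch (q ^ (-(n : ℤ))) q k * qPoch x q k / qPoch q q k * (q ^ (1 + n) / μ) ^ k

/-- Orthogonality weight `ρ(s)`. -/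
noncomputable def qCharlierWeight (q μ : ℝ) (s : ℕ) : ℝ :=
  qPochInf μ q * μ ^ s * q ^ (s ^ 2) / (qPoch q q s * qPoch μ q s)

/-- q-wave functions `ψ_n(s)`. -/
noncomputable def qWave (q μ : ℝ) (n s : ℕ) : ℝ :=
  (1 / Real.sqrt (qPoch q q n / μ ^ n)) * Real.sqrt ((q : ℝ) ^ (-(s : ℤ))) *
    Real.sqrt (qCharlierWeight q μ s) * qCharlier μ q n (q ^ (-(s : ℤ)))

/-- q-annihilation operator `a`. -/
noncomputable def qAnnih (q μ : ℝ) (f : ℕ → ℝ) (s : ℕ) : ℝ :=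
  (1 / Real.sqrt (1 - q)) *
    (Real.sqrt μ * q ^ s * f s -
      Real.sqrt ((1 - q ^ (s + 1)) * (1 - μ * q ^ s)) * f (s + 1))

/-- q-creation operator `a⁺` (with the convention `f (-1) = 0`). -/
noncomputable def qCreat (q μ : ℝ) (f : ℕ → ℝ) (s : ℕ) : ℝ :=
  (1 / Real.sqrt (1 - q)) *
    (Real.sqrt μ * q ^ s * f s -
      Real.sqrt ((1 - q ^ s) * (1 - μ * q ^ ((s : ℤ) - 1))) *
        (if s = 0 then 0 else f (s - 1)))

/-!
The off-diagonal terms of `a a⁺ - q a⁺ a` cancel because the diagonal coefficient `√μ q^s`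
gets multiplied by `q` under the shift `s ↦ s + 1`. What remains on the diagonal is
`((1 - q) μ q^(2s) + (1 - q^(s+1))(1 - μ q^s) - q (1 - q^s)(1 - μ q^(s-1))) / (1 - q)`,
and the numerator equals `1 - q`.
-/

noncomputable def qLadderCoeff (q μ : ℝ) (s : ℕ) : ℝ :=
  Real.sqrt ((1 - q ^ (s + 1)) * (1 - μ * q ^ s))

section

variable {q μ : ℝ}

theorem qAnnih_eq (f : ℕ → ℝ) (s : ℕ) :
    qAnnih q μ f s =
      1 / Real.sqrt (1 - q) * (Real.sqrt μ * q ^ s * f s - qLadderCoeff q μ s * f (s + 1)) :=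
  rfl

theorem qCreat_zero (f : ℕ → ℝ) : qCreat q μ f 0 = 1 / Real.sqrt (1 - q) * (Real.sqrt μ * f 0) := by
  simp [qCreat]

theorem qCreat_succ (f : ℕ → ℝ) (s : ℕ) :
    qCreat q μ f (s + 1) =
      1 / Real.sqrt (1 - q) *
        (Real.sqrt μ * q ^ (s + 1) * f (s + 1) - qLadderCoeff q μ s * f s) := by
  simp [qCreat, qLadderCoeff]

theorem qLadderCoeff_sq (hq : 0 ≤ q) (hq1 : q ≤ 1) (hμ1 : μ ≤ 1) (s : ℕ) :
    qLadderCoeff q μ s ^ 2 = (1 - q ^ (s + 1)) * (1 - μ * q ^ s) :=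
  Real.sq_sqrt <| mul_nonneg (sub_nonneg.2 (pow_le_one₀ hq hq1))
    (sub_nonneg.2 (mul_le_one₀ hμ1 (pow_nonneg hq s) (pow_le_one₀ hq hq1)))

theorem one_div_sqrt_sq_mul_self {x : ℝ} (hx : 0 < x) : (1 / Real.sqrt x) ^ 2 * x = 1 := by
  rw [div_pow, one_pow, Real.sq_sqrt hx.le, one_div_mul_cancel hx.ne']

end

theorem q_commutation (q μ : ℝ) (hq : 0 < q) (hq1 : q < 1)
    (hμ : 0 < μ) (hμ1 : μ < 1) (f : ℕ → ℝ) (s : ℕ) :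
    qAnnih q μ (qCreat q μ f) s - q * qCreat q μ (qAnnih q μ f) s = f s := by
  have hr := one_div_sqrt_sq_mul_self (sub_pos.2 hq1)
  have hm := Real.sq_sqrt hμ.le
  have hb := qLadderCoeff_sq hq.le hq1.le hμ1.le
  set r := 1 / Real.sqrt (1 - q)
  cases s with
  | zero =>
    rw [qAnnih_eq, qCreat_zero, qCreat_succ, qCreat_zero, qAnnih_eq]
    linear_combination r ^ 2 * (1 - q) * f 0 * hm + r ^ 2 * f 0 * hb 0 + f 0 * hr
  | succ n =>
    rw [qAnnih_eq, qCreat_succ, qCreat_succ, qCreat_succ, qAnnih_eq, qAnnih_eq]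
    linear_combination r ^ 2 * (1 - q) * q ^ (2 * (n + 1)) * f (n + 1) * hm +
      r ^ 2 * f (n + 1) * hb (n + 1) - q * r ^ 2 * f (n + 1) * hb n + f (n + 1) * hr
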